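/- If N = p_1^{2a_1} p_2^{2a_2} ⋯ p_t^{2a_t} = m^2 is a quasiperfect number (where p_1, ..., p_t are distinct primes and a_1, ..., a_t are positive integers), then there exists an index j such that σ(p_j^{2a_j}) ≡ 3 (mod 8) and σ(p_j^{2a_j}) has no prime factor congruent to 5 or 7 modulo 8. -/

import Mathlib

/-- A positive integer `N` is quasiperfect if `σ(N) = 2N + 1`. -/
def Quasiperfect (N : ℕ) : Prop :=
  0 < N ∧ ArithmeticFunction.sigma 1 N = 2 * N + 1

/-!
Since `N = m²`, `σ(N) = 2m² + 1`, and `-2` is a square modulo every prime factor `q` of `2m² + 1`;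
by the second supplement to quadratic reciprocity `q ≡ 1, 3 (mod 8)`. As `{1, 3}` is closed under
multiplication mod 8, every divisor of `2m² + 1`, in particular every factor `σ(p_i^{2a_i})` of
`σ(N) = ∏ σ(p_i^{2a_i})`, is `≡ 1, 3 (mod 8)`. This rules out `2 ∣ N`, because
`σ(2^{2a}) = 2^{2a+1} - 1 ≡ 7 (mod 8)`; so `m` is odd and `σ(N) = 2m² + 1 ≡ 3 (mod 8)`, which
forces some factor to be `≡ 3 (mod 8)`.
-/

open ArithmeticFunction
open scoped ArithmeticFunction.sigma

theorem Nat.Prime.mod_eight_of_dvd_two_mul_sq_add_one {q : ℕ} (hq : q.Prime) {m : ℕ}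
    (hd : q ∣ 2 * m ^ 2 + 1) : q % 8 = 1 ∨ q % 8 = 3 := by
  have hq2 : q ≠ 2 := by
    rintro rfl
    omega
  have : Fact q.Prime := ⟨hq⟩
  have h0 : ((2 * m ^ 2 + 1 : ℕ) : ZMod q) = 0 := (ZMod.natCast_eq_zero_iff _ _).mpr hd
  push_cast at h0
  exact (ZMod.exists_sq_eq_neg_two_iff hq2).mp ⟨2 * m, by linear_combination -2 * h0⟩

theorem Nat.mod_eight_of_forall_prime_dvd {n : ℕ} (hn : n ≠ 0)
    (h : ∀ q, q.Prime → q ∣ n → q % 8 = 1 ∨ q % 8 = 3) : n % 8 = 1 ∨ n % 8 = 3 := by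
  induction n using Nat.recOnMul with
  | zero => exact absurd rfl hn
  | one => exact Or.inl rfl
  | prime q hq => exact h q hq dvd_rfl
  | mul a b iha ihb =>
    have ha := iha (left_ne_zero_of_mul hn) fun q hq hqa => h q hq (hqa.mul_right b)
    have hb := ihb (right_ne_zero_of_mul hn) fun q hq hqb => h q hq (hqb.mul_left a)
    rw [Nat.mul_mod]
    rcases ha with ha | ha <;> rcases hb with hb | hb <;> simp [ha, hb]

theorem Nat.mod_eight_of_dvd_two_mul_sq_add_one {d m : ℕ} (hd : d ∣ 2 * m ^ 2 + 1) :
    d % 8 = 1 ∨ d % 8 = 3 :=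
  Nat.mod_eight_of_forall_prime_dvd (by rintro rfl; simp at hd) fun _ hq hqd =>
    hq.mod_eight_of_dvd_two_mul_sq_add_one (hqd.trans hd)

theorem Nat.two_mul_sq_add_one_mod_eight {m : ℕ} (hm : Odd m) : (2 * m ^ 2 + 1) % 8 = 3 := by
  have h8 := Nat.eight_dvd_sq_sub_one_of_odd hm
  have h1 : 1 ≤ m ^ 2 := Nat.one_le_pow _ _ hm.pos
  omega

theorem ArithmeticFunction.sigma_one_two_pow_mod_eight {k : ℕ} (hk : 2 ≤ k) :
    σ 1 (2 ^ k) % 8 = 7 := by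
  rw [sigma_one_apply_prime_pow Nat.prime_two, Nat.geomSum_eq le_rfl]
  obtain ⟨j, rfl⟩ := Nat.exists_eq_add_of_le' hk
  rw [show j + 2 + 1 = j + 3 by ring, pow_add]
  have : 0 < 2 ^ j := Nat.two_pow_pos j
  omega

theorem ArithmeticFunction.IsMultiplicative.map_prod_prime_pow {R ι : Type*}
    [CommMonoidWithZero R] {f : ArithmeticFunction R} (hf : f.IsMultiplicative) (s : Finset ι)
    {p : ι → ℕ} (e : ι → ℕ) (hp : ∀ i ∈ s, (p i).Prime) (hinj : Set.InjOn p s) :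
    f (∏ i ∈ s, p i ^ e i) = ∏ i ∈ s, f (p i ^ e i) :=
  hf.map_prod _ s fun i hi j hj hij =>
    ((Nat.coprime_primes (hp i hi) (hp j hj)).mpr fun h => hij (hinj hi hj h)).pow _ _

theorem exists_eq_two_of_two_dvd_prod_prime_pow {ι : Type*} (s : Finset ι) {p : ι → ℕ}
    (e : ι → ℕ) (hp : ∀ i ∈ s, (p i).Prime) (h : 2 ∣ ∏ i ∈ s, p i ^ e i) :
    ∃ i ∈ s, p i = 2 ∧ e i ≠ 0 := by
  obtain ⟨i, hi, hdvd⟩ := (Nat.prime_two.prime.dvd_finsetProd_iff _).mp h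
  refine ⟨i, hi, ?_, ?_⟩
  · exact ((Nat.prime_dvd_prime_iff_eq Nat.prime_two (hp i hi)).mp
      (Nat.prime_two.dvd_of_dvd_pow hdvd)).symm
  · intro he
    simp [he] at hdvd

theorem stmt_19_general (t : ℕ) (p a : Fin t → ℕ) (N m : ℕ)
    (hp : ∀ i, (p i).Prime) (hinj : Function.Injective p)
    (hN : N = ∏ i, p i ^ (2 * a i)) (hm : N = m ^ 2)
    (hq : Quasiperfect N) :
    ∃ j : Fin t, ArithmeticFunction.sigma 1 (p j ^ (2 * a j)) % 8 = 3 ∧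
      ∀ q : ℕ, q.Prime → q ∣ ArithmeticFunction.sigma 1 (p j ^ (2 * a j)) →
        q % 8 ≠ 5 ∧ q % 8 ≠ 7 := by
  have hσ : σ 1 N = 2 * m ^ 2 + 1 := by rw [hq.2, hm]
  have hmul : σ 1 N = ∏ i, σ 1 (p i ^ (2 * a i)) := by
    rw [hN]
    exact isMultiplicative_sigma.map_prod_prime_pow _ _ (fun i _ => hp i) hinj.injOn
  have hdvd (i : Fin t) : σ 1 (p i ^ (2 * a i)) ∣ 2 * m ^ 2 + 1 :=
    hσ ▸ hmul ▸ Finset.dvd_prod_of_mem _ (Finset.mem_univ i)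
  have hodd : Odd m := by
    by_contra heven
    have h2N : 2 ∣ ∏ i, p i ^ (2 * a i) :=
      hN ▸ hm ▸ dvd_pow (Nat.not_odd_iff_even.mp heven).two_dvd two_ne_zero
    obtain ⟨i, -, hi2, hai⟩ := exists_eq_two_of_two_dvd_prod_prime_pow _ _ (fun i _ => hp i) h2N
    have := Nat.mod_eight_of_dvd_two_mul_sq_add_one (hdvd i)
    rw [hi2, sigma_one_two_pow_mod_eight (by omega)] at this
    omega
  obtain ⟨j, hj⟩ : ∃ j, σ 1 (p j ^ (2 * a j)) % 8 = 3 := by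
    by_contra! h
    have hall (i : Fin t) : σ 1 (p i ^ (2 * a i)) % 8 = 1 :=
      (Nat.mod_eight_of_dvd_two_mul_sq_add_one (hdvd i)).resolve_right (h i)
    have h1 : (2 * m ^ 2 + 1) % 8 = 1 := by
      rw [← hσ, hmul, Finset.prod_nat_mod]
      simp [hall]
    rw [Nat.two_mul_sq_add_one_mod_eight hodd] at h1
    omega
  refine ⟨j, hj, fun q hqp hqd => ?_⟩
  have := hqp.mod_eight_of_dvd_two_mul_sq_add_one (hqd.trans (hdvd j))
  omega

/-- If `N = p₁^{2a₁} ⋯ p_t^{2a_t} = m²` is quasiperfect, then there is an index `j`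
such that `σ(p j ^ (2 * a j)) ≡ 3 (mod 8)` and `σ(p j ^ (2 * a j))` has no prime
factor congruent to `5` or `7` modulo `8`. -/
theorem stmt_19 (t : ℕ) (p a : Fin t → ℕ) (N m : ℕ)
    (hp : ∀ i, (p i).Prime) (hinj : Function.Injective p)
    (ha : ∀ i, 0 < a i)
    (hN : N = ∏ i, p i ^ (2 * a i)) (hm : N = m ^ 2)
    (hq : Quasiperfect N) :
    ∃ j : Fin t, ArithmeticFunction.sigma 1 (p j ^ (2 * a j)) % 8 = 3 ∧
      ∀ q : ℕ, q.Prime → q ∣ ArithmeticFunction.sigma 1 (p j ^ (2 * a j)) →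
        q % 8 ≠ 5 ∧ q % 8 ≠ 7 :=
  stmt_19_general t p a N m hp hinj hN hm hq
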